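/- For every integer r ≥ 1, the Ramsey number R(𝒫₄;r) satisfies R(𝒫₄;r) ≥ r + max{s_r, t_r} + 1, where s_r = max{ s ∈ ℤ : Σ_{k=6}^{s} C(k,2) ≤ r − 1 } and t_r = max{ t ∈ ℤ : C(t,3) ≤ r }. In particular, R(𝒫₄;r) ≥ r + 6 for all r ≥ 1. -/

import Mathlib

/-!
Split the vertices into `m` low vertices and `K` high ones. An edge through a low vertex gets
the colour of its least vertex, so those colour classes are stars; the `C(K, 3)` high edges are
spread injectively over the colours, except that possibly all high edges inside one fixed 6-set
share a colour that no star uses. A minimal 4-path fits neither in an intersecting family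
plus one edge (among any three of its edges two are disjoint) nor in six vertices
(`a₀ ∪ a₂ ∪ a₃` has at least seven). Taking `m = r` and `C(K, 3) ≤ r` gives `tᵣ`; taking
`m = r - 1` and `C(K, 3) - 20 ≤ r - 1` gives `sᵣ`, because
`∑_{k=6}^{s} C(k, 2) = C(s + 1, 3) - 20`.
-/

open Finset

/-- Four edges form a 3-uniform minimal 4-path: `aᵢ ∩ aⱼ ≠ ∅ ↔ |i - j| ≤ 1`. -/
def IsMinPath4 {α : Type*} [DecidableEq α] (a₀ a₁ a₂ a₃ : Finset α) : Prop :=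
  (a₀ ∩ a₁).Nonempty ∧ (a₁ ∩ a₂).Nonempty ∧ (a₂ ∩ a₃).Nonempty ∧
    a₀ ∩ a₂ = ∅ ∧ a₀ ∩ a₃ = ∅ ∧ a₁ ∩ a₃ = ∅

/-- The `r`-coloring `c` of the edges of the complete 3-graph on `Fin n`
yields a monochromatic minimal 4-path. -/
def HasMonoP4 {n r : ℕ} (c : Finset (Fin n) → Fin r) : Prop :=
  ∃ a₀ a₁ a₂ a₃ : Finset (Fin n),
    a₀.card = 3 ∧ a₁.card = 3 ∧ a₂.card = 3 ∧ a₃.card = 3 ∧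
    IsMinPath4 a₀ a₁ a₂ a₃ ∧
    c a₀ = c a₁ ∧ c a₁ = c a₂ ∧ c a₂ = c a₃

namespace IsMinPath4

variable {α β : Type*} [DecidableEq α] [DecidableEq β] {a₀ a₁ a₂ a₃ : Finset α}

lemma map (f : α ↪ β) (h : IsMinPath4 a₀ a₁ a₂ a₃) :
    IsMinPath4 (a₀.map f) (a₁.map f) (a₂.map f) (a₃.map f) := by
  simpa only [IsMinPath4, ← map_inter, map_nonempty, map_eq_empty] using h

lemma ne₀₁ (h : IsMinPath4 a₀ a₁ a₂ a₃) : a₀ ≠ a₁ := by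
  rintro rfl
  exact h.2.1.ne_empty h.2.2.2.1

lemma ne₀₃ (h : IsMinPath4 a₀ a₁ a₂ a₃) : a₀ ≠ a₃ := by
  rintro rfl
  exact (h.1.mono inter_subset_left).ne_empty (by simpa using h.2.2.2.2.1)

lemma ne₂₃ (h : IsMinPath4 a₀ a₁ a₂ a₃) : a₂ ≠ a₃ := by
  rintro rfl
  exact h.2.1.ne_empty h.2.2.2.2.2

lemma not_subset_union {F G : Set (Finset α)} (hF : F.Intersecting) (hG : G.Subsingleton)
    (h : IsMinPath4 a₀ a₁ a₂ a₃) : ¬{a₀, a₁, a₂, a₃} ⊆ F ∪ G := by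
  have hdisj {a b} (ha : a ∈ F) (hb : b ∈ F) (hab : a ∩ b = ∅) : False :=
    hF ha hb (disjoint_iff_inter_eq_empty.2 hab)
  simp only [Set.insert_subset_iff, Set.singleton_subset_iff, Set.mem_union]
  rintro ⟨m₀ | m₀, m₁ | m₁, m₂ | m₂, m₃ | m₃⟩
  all_goals first
    | exact hdisj m₀ m₂ h.2.2.2.1
    | exact hdisj m₀ m₃ h.2.2.2.2.1
    | exact hdisj m₁ m₃ h.2.2.2.2.2
    | exact h.ne₀₁ (hG m₀ m₁)
    | exact h.ne₀₃ (hG m₀ m₃)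
    | exact h.ne₂₃ (hG m₂ m₃)

lemma card_add_card_lt_card_union (h : IsMinPath4 a₀ a₁ a₂ a₃) (h₂₃ : #a₂ = #a₃) :
    #a₀ + #a₂ < #(a₀ ∪ (a₂ ∪ a₃)) := by
  have hdisj : Disjoint a₀ (a₂ ∪ a₃) := disjoint_union_right.2
    ⟨disjoint_iff_inter_eq_empty.2 h.2.2.2.1, disjoint_iff_inter_eq_empty.2 h.2.2.2.2.1⟩
  have hlt : #a₂ < #(a₂ ∪ a₃) := by
    refine card_lt_card (Finset.ssubset_iff_subset_ne.2
      ⟨subset_union_left, fun heq => h.ne₂₃ ?_⟩)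
    exact (eq_of_subset_of_card_le (heq ▸ subset_union_right) h₂₃.le).symm
  rw [card_union_of_disjoint hdisj]
  omega

end IsMinPath4

section Coloring

variable {n r : ℕ}

def colorClass (c : Finset (Fin n) → Fin r) (j : Fin r) : Set (Finset (Fin n)) :=
  {e | #e = 3 ∧ c e = j}

theorem not_hasMonoP4_of_colorClass {c : Finset (Fin n) → Fin r}
    (h : ∀ j, (∃ F G : Set (Finset (Fin n)), F.Intersecting ∧ G.Subsingleton ∧
        colorClass c j ⊆ F ∪ G) ∨
      ∃ S : Finset (Fin n), #S ≤ 6 ∧ colorClass c j ⊆ Set.Iic S) :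
    ¬HasMonoP4 c := by
  rintro ⟨a₀, a₁, a₂, a₃, h₀, h₁, h₂, h₃, hP, c₀₁, c₁₂, c₂₃⟩
  have hpath : {a₀, a₁, a₂, a₃} ⊆ colorClass c (c a₀) := by
    simp only [Set.insert_subset_iff, Set.singleton_subset_iff]
    exact ⟨⟨h₀, rfl⟩, ⟨h₁, c₀₁.symm⟩, ⟨h₂, (c₀₁.trans c₁₂).symm⟩,
      ⟨h₃, (c₀₁.trans (c₁₂.trans c₂₃)).symm⟩⟩
  rcases h (c a₀) with ⟨F, G, hF, hG, hFG⟩ | ⟨S, hS, hcS⟩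
  · exact hP.not_subset_union hF hG (hpath.trans hFG)
  · have hsub : a₀ ∪ (a₂ ∪ a₃) ⊆ S := union_subset (hcS (hpath (by simp)))
      (union_subset (hcS (hpath (by simp))) (hcS (hpath (by simp))))
    have := card_le_card hsub
    have := hP.card_add_card_lt_card_union (h₂.trans h₃.symm)
    omega

def HasP4FreeColoring (n r : ℕ) : Prop :=
  ∃ c : Finset (Fin n) → Fin r, ¬HasMonoP4 c

theorem HasP4FreeColoring.mono {n' : ℕ} (hn : n' ≤ n) (h : HasP4FreeColoring n r) :
    HasP4FreeColoring n' r := by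
  obtain ⟨c, hc⟩ := h
  refine ⟨fun e => c (e.map (Fin.castLEEmb hn)), ?_⟩
  rintro ⟨a₀, a₁, a₂, a₃, h₀, h₁, h₂, h₃, hP, c₀₁, c₁₂, c₂₃⟩
  exact hc ⟨_, _, _, _, by rwa [card_map], by rwa [card_map], by rwa [card_map],
    by rwa [card_map], hP.map _, c₀₁, c₁₂, c₂₃⟩

def highVerts (m : ℕ) : Finset (Fin n) :=
  {v | m ≤ (v : ℕ)}

lemma card_highVerts (m : ℕ) : #(highVerts (n := n) m) = n - m := by
  have := Fin.card_filter_val_lt (n := n) (m := m)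
  have := card_filter_add_card_filter_not (s := (univ : Finset (Fin n)))
    (fun v : Fin n => (v : ℕ) < m)
  simp only [highVerts, not_lt, card_univ, Fintype.card_fin] at *
  omega

lemma mem_highVerts {m : ℕ} {v : Fin n} : v ∈ highVerts m ↔ m ≤ (v : ℕ) := by
  simp [highVerts]

def lowStarColoring {m : ℕ} (hm : m ≤ r) (d : Finset (Fin n) → Fin r) (e : Finset (Fin n)) :
    Fin r :=
  if h : ∃ he : e.Nonempty, ((e.min' he : Fin n) : ℕ) < m then ⟨e.min' h.1, h.2.trans_le hm⟩
  else d e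

lemma lowStarColoring_eq {m : ℕ} {hm : m ≤ r} {d : Finset (Fin n) → Fin r}
    {e : Finset (Fin n)} {j : Fin r} (he : lowStarColoring hm d e = j) :
    (∃ v ∈ e, (v : ℕ) = j ∧ (j : ℕ) < m) ∨ (e ⊆ highVerts m ∧ d e = j) := by
  unfold lowStarColoring at he
  split_ifs at he with h
  · subst he
    exact Or.inl ⟨_, min'_mem _ _, rfl, h.2⟩
  · refine Or.inr ⟨fun v hv => mem_highVerts.2 ?_, he⟩
    by_contra hlt
    exact h ⟨⟨v, hv⟩, (Fin.le_iff_val_le_val.1 (min'_le e v hv)).trans_lt (not_le.1 hlt)⟩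

theorem not_hasMonoP4_lowStarColoring {m : ℕ} (hm : m ≤ r) {d : Finset (Fin n) → Fin r}
    (hd : ∀ j, (colorClass d j ∩ Set.Iic (highVerts m)).Subsingleton ∨
      (m ≤ j ∧ ∃ S : Finset (Fin n), #S ≤ 6 ∧
        colorClass d j ∩ Set.Iic (highVerts m) ⊆ Set.Iic S)) :
    ¬HasMonoP4 (lowStarColoring hm d) := by
  have hclass {j e} (he : e ∈ colorClass (lowStarColoring hm d) j) :
      (∃ v ∈ e, (v : ℕ) = j ∧ (j : ℕ) < m) ∨
        e ∈ colorClass d j ∩ Set.Iic (highVerts m) := by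
    rcases lowStarColoring_eq he.2 with hlow | ⟨hhigh, hd⟩
    · exact Or.inl hlow
    · exact Or.inr ⟨⟨he.1, hd⟩, hhigh⟩
  refine not_hasMonoP4_of_colorClass fun j => ?_
  rcases hd j with hsub | ⟨hmj, S, hS, hdS⟩
  · refine Or.inl ⟨{e | ∃ v ∈ e, (v : ℕ) = j}, _, ?_, hsub, fun e he => ?_⟩
    · rintro a ⟨v, hva, hv⟩ b ⟨w, hwb, hw⟩
      exact not_disjoint_iff.2 ⟨v, hva, Fin.ext (hv.trans hw.symm) ▸ hwb⟩
    · rcases hclass he with ⟨v, hv, hvj, -⟩ | hhigh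
      · exact Or.inl ⟨v, hv, hvj⟩
      · exact Or.inr hhigh
  · refine Or.inr ⟨S, hS, fun e he => ?_⟩
    rcases hclass he with ⟨-, -, -, hjm⟩ | hhigh
    · omega
    · exact hdS hhigh

theorem hasP4FreeColoring_of_choose_le {k t : ℕ} (ht : t.choose 3 ≤ k + 1) :
    HasP4FreeColoring (k + 1 + t) (k + 1) := by
  let A := powersetCard 3 (highVerts (n := k + 1 + t) (k + 1))
  obtain ⟨g⟩ : Nonempty (A ↪ Fin (k + 1)) :=
    Function.Embedding.nonempty_of_card_le (by
      simpa only [Fintype.card_coe, Fintype.card_fin, A, card_powersetCard, card_highVerts,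
        Nat.add_sub_cancel_left] using ht)
  let d e := if he : e ∈ A then g ⟨e, he⟩ else 0
  refine ⟨lowStarColoring le_rfl d, not_hasMonoP4_lowStarColoring le_rfl fun j => Or.inl ?_⟩
  rintro e ⟨⟨he, hej⟩, heT⟩ e' ⟨⟨he', hej'⟩, heT'⟩
  have hA : e ∈ A := mem_powersetCard.2 ⟨heT, he⟩
  have hA' : e' ∈ A := mem_powersetCard.2 ⟨heT', he'⟩
  simp only [d, dif_pos hA, dif_pos hA'] at hej hej'
  exact congrArg Subtype.val (g.injective (hej.trans hej'.symm))

theorem hasP4FreeColoring_of_choose_le_add {k K : ℕ} (hK : 6 ≤ K)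
    (hKk : K.choose 3 ≤ k + 20) :
    HasP4FreeColoring (k + K) (k + 1) := by
  let T := highVerts (n := k + K) k
  let S := highVerts (n := k + K) (k + K - 6)
  let A := powersetCard 3 T \ powersetCard 3 S
  have hST : S ⊆ T := fun v hv =>
    mem_highVerts.2 ((by omega : k ≤ k + K - 6).trans (mem_highVerts.1 hv))
  obtain ⟨g⟩ : Nonempty (A ↪ Fin k) := Function.Embedding.nonempty_of_card_le (by
    simp only [Fintype.card_coe, Fintype.card_fin, A, card_sdiff_of_subset (powersetCard_mono hST),
      card_powersetCard, T, S, card_highVerts]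
    rw [Nat.add_sub_cancel_left, show k + K - (k + K - 6) = 6 by omega]
    have : Nat.choose 6 3 = 20 := rfl
    omega)
  let d e := if he : e ∈ A then (g ⟨e, he⟩).castSucc else Fin.last k
  refine ⟨lowStarColoring k.le_succ d, not_hasMonoP4_lowStarColoring _ fun j => ?_⟩
  by_cases hj : j = Fin.last k
  · refine Or.inr ⟨by simp [hj], S, (card_highVerts _).trans_le (by omega), ?_⟩
    rintro e ⟨⟨he, hej⟩, heT⟩
    have hA : e ∉ A := fun hA => by simp [d, hA, hj] at hej
    have heS : e ∈ powersetCard 3 S := by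
      by_contra heS
      exact hA (mem_sdiff.2 ⟨mem_powersetCard.2 ⟨heT, he⟩, heS⟩)
    exact (mem_powersetCard.1 heS).1
  · refine Or.inl ?_
    have hA {e} (hej : d e = j) : e ∈ A := by
      by_contra hA
      simp only [d, dif_neg hA] at hej
      exact hj hej.symm
    rintro e ⟨⟨-, hej⟩, -⟩ e' ⟨⟨-, hej'⟩, -⟩
    have h := hej.trans hej'.symm
    simp only [d, dif_pos (hA hej), dif_pos (hA hej'), Fin.castSucc_inj] at h
    exact congrArg Subtype.val (g.injective h)

end Coloring

lemma sum_Icc_six_choose_two_add {s : ℕ} (hs : 5 ≤ s) :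
    ∑ k ∈ Icc 6 s, k.choose 2 + 20 = (s + 1).choose 3 := by
  have h₂ : Icc 2 s = Ioc 1 s := Icc_add_one_left_eq_Ioc 1 s
  have h₆ : Icc 6 s = Ioc 5 s := Icc_add_one_left_eq_Ioc 5 s
  rw [← Nat.sum_Icc_choose, h₂, h₆, ← sum_Ioc_consecutive _ (by omega : 1 ≤ 5) hs,
    add_comm]
  rfl

/-- Proposition 7.1: for every `r ≥ 1`, `R(𝒫₄; r) ≥ r + max{sᵣ, tᵣ} + 1`,
where `sᵣ = max{s : ∑_{k=6}^{s} C(k,2) ≤ r - 1}` and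
`tᵣ = max{t : C(t,3) ≤ r}`; in particular `R(𝒫₄; r) ≥ r + 6`.
(The lower bound `R(𝒫₄; r) ≥ m + 1` is expressed as: for every `n ≤ m` there
is an `r`-coloring of `K⁽³⁾ₙ` with no monochromatic minimal 4-path.) -/
theorem ramsey_P4_lower (r : ℕ) (hr : 1 ≤ r) :
    (∀ s t : ℕ, (∑ k ∈ Finset.Icc 6 s, Nat.choose k 2) ≤ r - 1 →
      Nat.choose t 3 ≤ r →
      ∀ n : ℕ, n < r + max s t + 1 →
        ∃ c : Finset (Fin n) → Fin r, ¬HasMonoP4 c) ∧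
    (∀ n : ℕ, n < r + 6 → ∃ c : Finset (Fin n) → Fin r, ¬HasMonoP4 c) := by
  obtain ⟨k, rfl⟩ : ∃ k, r = k + 1 := ⟨r - 1, by omega⟩
  have hsix : HasP4FreeColoring (k + 6) (k + 1) :=
    hasP4FreeColoring_of_choose_le_add le_rfl (by simp [Nat.choose])
  refine ⟨fun s t hs ht n hn => ?_, fun n hn => hsix.mono (by omega)⟩
  rcases le_total s t with hst | hts
  · exact (hasP4FreeColoring_of_choose_le ht).mono (by omega)
  rcases lt_or_ge s 5 with hs5 | hs5
  · exact hsix.mono (by omega)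
  have hchoose := sum_Icc_six_choose_two_add hs5
  exact (hasP4FreeColoring_of_choose_le_add (K := s + 1) (by omega) (by omega)).mono (by omega)
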